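/- arXiv:1904.09960 — 3 statements merged into one kernel-verified Lean document; each statement's English description precedes it below -/
import Mathlib

section
/- For i = 1,…,l, let 𝒞^i be a set of m_i node-disjoint chains whose vertex sets partition a set V_i with |V_i| = n_i, let T^i be a time function for 𝒞^i, and let G_i be a (𝒞^i,T^i)-constructed graph, where the sets V_1,…,V_l are pairwise disjoint. Let V = ⋃_i V_i, n = Σ_i n_i, m = Σ_i m_i, let 𝒞 = ⋃_i 𝒞^i (a set of m node-disjoint chains on V), and let T be a time function for 𝒞 such that for each i and all u, v ∈ V_i one has T(u) ≤ T(v) if and only if T^i(u) ≤ T^i(v). Let E* be a set of cross edges, i.e., pairs (u,v) with u ∈ V_i, v ∈ V_j, i ≠ j, each satisfying T_max(u) ≥ T(v), and let G be the digraph on V with edge set (⋃_i E(G_i)) ∪ E*. Then G is a (𝒞,T)-constructed graph; in particular, the union of the sets of sources of the 𝒞^i is a zero forcing set of G, and this conclusion holds for every choice of (𝒞^i,T^i)-constructed graphs G_i′ in place of the G_i. -/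
/-- The black vertex `u` forces the white vertex `v` (color-change rule), with respect to
edge set `E` and current black set `B`: `v` is the only white out-neighbor of `u` other
than `u` itself. -/
def Forces {V : Type*} [DecidableEq V] (E : Finset (V × V)) (B : Finset V) (u v : V) : Prop :=
  u ∈ B ∧ v ∉ B ∧ u ≠ v ∧ (u, v) ∈ E ∧ ∀ w, (u, w) ∈ E → w ≠ u → w ∉ B → w = v

/-- Reachability between black sets by repeatedly applying the color-change rule. -/
inductive ZFReach {V : Type*} [DecidableEq V] (E : Finset (V × V)) : Finset V → Finset V → Prop
  | refl (B : Finset V) : ZFReach E B B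
  | step {B C : Finset V} {u v : V} (h : Forces E B u v)
      (hr : ZFReach E (insert v B) C) : ZFReach E B C

/-- `Z` is a zero forcing set of the digraph on `V` with edge set `E`:
starting from the black set `Z`, repeated application of the color-change rule
turns all vertices black. -/
def IsZFS {V : Type*} [Fintype V] [DecidableEq V] (E : Finset (V × V)) (Z : Finset V) : Prop :=
  ZFReach E Z Finset.univ

/-- A set of node-disjoint chains whose vertex sets partition `V`, encoded by the
(injective, acyclic) partial successor map along the chains. -/
structure ChainSystem (V : Type*) where
  next : V → Option V
  inj : ∀ u v w, next u = some w → next v = some w → u = v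
  acyclic : ∀ v, ¬ Relation.TransGen (fun a b => next a = some b) v v

namespace ChainSystem

variable {V : Type*} [Fintype V] [DecidableEq V] (S : ChainSystem V)

/-- `v` is the source of one of the chains (no in-neighbor in the chains). -/
def IsSource (v : V) : Prop := ∀ u, S.next u ≠ some v

/-- The set of sources of the chains. -/
def sources : Finset V := Finset.univ.filter fun v => ∀ u, S.next u ≠ some v

/-- The number `m` of chains (= number of sources). -/
def m : ℕ := S.sources.card

/-- `γ = n − m + 1`. -/
def γ : ℕ := Fintype.card V - S.m + 1

/-- The set of chain edges `⋃ᵢ E(Cᵢ)`. -/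
def chainEdges : Finset (V × V) := Finset.univ.filter fun p => S.next p.1 = some p.2

/-- `T` is a time function for the set of chains: it takes values in `[1, γ]`, equals `1` on
sources, is injective on non-sources, and increases along chains. -/
def IsTimeFunction (T : V → ℕ) : Prop :=
  (∀ v, 1 ≤ T v ∧ T v ≤ S.γ) ∧
  (∀ v, S.IsSource v → T v = 1) ∧
  (∀ u v, ¬ S.IsSource u → ¬ S.IsSource v → u ≠ v → T u ≠ T v) ∧
  (∀ u v, S.next u = some v → T u < T v)

/-- `T_max(v) = γ` if `v` is a sink, and `T(v+1) − 1` otherwise. -/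
def Tmax (T : V → ℕ) (v : V) : ℕ := (S.next v).elim S.γ fun w => T w - 1

/-- The digraph with edge set `E` is a `(𝒞,T)`-constructed graph: it contains all chain
edges, and every non-chain edge `(u,v)` satisfies `T_max(u) ≥ T(v)`. -/
def IsConstructed (T : V → ℕ) (E : Finset (V × V)) : Prop :=
  S.chainEdges ⊆ E ∧ ∀ p ∈ E, p ∉ S.chainEdges → T p.2 ≤ S.Tmax T p.1

/-- The edge set of the perfect `(𝒞,T)`-constructed graph: all chain edges together with
all pairs `(u,v)` with `T_max(u) ≥ T(v)`. -/
def perfEdges (T : V → ℕ) : Finset (V × V) :=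
  S.chainEdges ∪ Finset.univ.filter fun p => T p.2 ≤ S.Tmax T p.1

end ChainSystem

theorem ZFReach.trans' {V : Type*} [DecidableEq V] {E : Finset (V × V)} {A B C : Finset V}
    (h1 : ZFReach E A B) (h2 : ZFReach E B C) : ZFReach E A C := by
  induction h1 with
  | refl => exact h2
  | step h _ ih => exact ZFReach.step h (ih h2)

theorem ChainSystem.mem_sources_iff {V : Type*} [Fintype V] [DecidableEq V]
    (S : ChainSystem V) (v : V) : v ∈ S.sources ↔ S.IsSource v := by
  simp [ChainSystem.sources, ChainSystem.IsSource]

theorem zfs_of_constructed {V : Type*} [Fintype V] [DecidableEq V] (S : ChainSystem V)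
    (T : V → ℕ) (hT : S.IsTimeFunction T) (E : Finset (V × V))
    (hE : S.IsConstructed T E) : IsZFS E S.sources := by
  obtain ⟨hbound, hsrc1, hinj, hmono⟩ := hT
  obtain ⟨hchain, hnon⟩ := hE
  set B : ℕ → Finset V := fun t => Finset.univ.filter (fun v => v ∈ S.sources ∨ T v < t)
    with hBdef
  have hmem : ∀ t v, v ∈ B t ↔ S.IsSource v ∨ T v < t := by
    intro t v
    simp [hBdef, S.mem_sources_iff]
  have hstep : ∀ t, ZFReach E (B t) (B (t + 1)) := by
    intro t
    by_cases hex : ∃ v, ¬ S.IsSource v ∧ T v = t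
    · obtain ⟨v, hv, hvt⟩ := hex
      have hpred : ∃ u, S.next u = some v := by
        by_contra h
        push_neg at h
        exact hv h
      obtain ⟨u, hu⟩ := hpred
      have huv : T u < T v := hmono u v hu
      have hins : insert v (B t) = B (t + 1) := by
        ext w
        simp only [Finset.mem_insert, hmem]
        constructor
        · rintro (rfl | hsw | hw)
          · right; omega
          · exact Or.inl hsw
          · right; omega
        · rintro (hsw | hw)
          · exact Or.inr (Or.inl hsw)
          · rcases Nat.lt_succ_iff_lt_or_eq.mp hw with h | h
            · exact Or.inr (Or.inr h)
            · left
              by_cases hws : S.IsSource w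
              · exfalso
                have h1 := hsrc1 w hws
                have h2 := (hbound u).1
                omega
              · by_contra hne
                exact hinj w v hws hv hne (by omega)
      have hforce : Forces E (B t) u v := by
        refine ⟨?_, ?_, ?_, ?_, ?_⟩
        · rw [hmem]
          by_cases hus : S.IsSource u
          · exact Or.inl hus
          · exact Or.inr (by omega)
        · rw [hmem]
          push_neg
          exact ⟨hv, by omega⟩
        · intro h; subst h; omega
        · exact hchain (by simp [ChainSystem.chainEdges, hu])
        · intro w hw hwu hwB
          by_contra hwv
          apply hwB
          rw [hmem]
          by_cases hwc : (u, w) ∈ S.chainEdges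
          · exfalso
            have : S.next u = some w := by simpa [ChainSystem.chainEdges] using hwc
            rw [hu] at this
            exact hwv (Option.some_injective _ this).symm
          · have h2 := hnon (u, w) hw hwc
            have h3 : S.Tmax T u = T v - 1 := by simp [ChainSystem.Tmax, hu]
            have h4 := (hbound w).1
            right
            simp only at h2
            omega
      exact ZFReach.step hforce (hins ▸ ZFReach.refl _)
    · have heq : B (t + 1) = B t := by
        ext w
        rw [hmem, hmem]
        push_neg at hex
        constructor
        · rintro (h | h)
          · exact Or.inl h
          · rcases Nat.lt_succ_iff_lt_or_eq.mp h with h' | h'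
            · exact Or.inr h'
            · by_cases hws : S.IsSource w
              · exact Or.inl hws
              · exact absurd h' (hex w hws)
        · rintro (h | h)
          · exact Or.inl h
          · exact Or.inr (by omega)
      rw [heq]; exact ZFReach.refl _
  have hiter : ∀ t, ZFReach E (B 0) (B t) := by
    intro t
    induction t with
    | zero => exact ZFReach.refl _
    | succ n ih => exact ih.trans' (hstep n)
  have h0 : B 0 = S.sources := by
    ext w
    rw [hmem, S.mem_sources_iff]
    constructor
    · rintro (h | h)
      · exact h
      · omega
    · exact Or.inl
  have hlast : B (S.γ + 1) = Finset.univ := by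
    ext w
    simp only [Finset.mem_univ, iff_true, hmem]
    right
    have := (hbound w).2
    omega
  have := hiter (S.γ + 1)
  rw [h0, hlast] at this
  exact this

/-- combining `(𝒞ⁱ,Tⁱ)`-constructed graphs `Gᵢ` on pairwise disjoint vertex
sets via cross edges `E*` each satisfying `T_max(u) ≥ T(v)` — where `𝒞 = ⋃ᵢ 𝒞ⁱ` and `T`
is a time function for `𝒞` order-compatible with each `Tⁱ` — yields a `(𝒞,T)`-constructed
graph; in particular the union of the sources of the `𝒞ⁱ` is a zero forcing set of the
combined graph (for every choice of the constructed graphs `Gᵢ`). -/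
theorem stmt16 {l : ℕ} (Vt : Fin l → Type*) [∀ i, Fintype (Vt i)] [∀ i, DecidableEq (Vt i)]
    (Si : ∀ i, ChainSystem (Vt i)) (Ti : ∀ i, Vt i → ℕ)
    (hTi : ∀ i, (Si i).IsTimeFunction (Ti i))
    (Gi : ∀ i, Finset (Vt i × Vt i)) (hGi : ∀ i, (Si i).IsConstructed (Ti i) (Gi i))
    (S : ChainSystem (Σ i, Vt i))
    (hS : ∀ (i : Fin l) (v : Vt i), S.next ⟨i, v⟩ = ((Si i).next v).map (Sigma.mk i))
    (T : (Σ i, Vt i) → ℕ) (hT : S.IsTimeFunction T)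
    (hcompat : ∀ (i : Fin l) (u v : Vt i), T ⟨i, u⟩ ≤ T ⟨i, v⟩ ↔ Ti i u ≤ Ti i v)
    (Estar : Finset ((Σ i, Vt i) × (Σ i, Vt i)))
    (hstar : ∀ p ∈ Estar, p.1.1 ≠ p.2.1 ∧ T p.2 ≤ S.Tmax T p.1) :
    S.IsConstructed T
      ((Finset.univ.biUnion fun i =>
          (Gi i).image fun p => ((⟨i, p.1⟩ : Σ j, Vt j), (⟨i, p.2⟩ : Σ j, Vt j))) ∪ Estar) ∧
    IsZFS
      ((Finset.univ.biUnion fun i =>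
          (Gi i).image fun p => ((⟨i, p.1⟩ : Σ j, Vt j), (⟨i, p.2⟩ : Σ j, Vt j))) ∪ Estar)
      (Finset.univ.biUnion fun i => (Si i).sources.image (Sigma.mk i)) := by 
  classical
  set Ebig := ((Finset.univ.biUnion fun i =>
      (Gi i).image fun p => ((⟨i, p.1⟩ : Σ j, Vt j), (⟨i, p.2⟩ : Σ j, Vt j))) ∪ Estar)
    with hEbig
  have hnext : ∀ (i : Fin l) (a : Vt i) (q : Σ j, Vt j),
      S.next ⟨i, a⟩ = some q ↔ ∃ b, (Si i).next a = some b ∧ q = ⟨i, b⟩ := by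
    intro i a q
    rw [hS]
    constructor
    · intro h
      rcases Option.map_eq_some_iff.mp h with ⟨b, hb, hq⟩
      exact ⟨b, hb, hq.symm⟩
    · rintro ⟨b, hb, rfl⟩
      simp [hb]
  have hconstr : S.IsConstructed T Ebig := by
    constructor
    · rintro ⟨⟨i, a⟩, q⟩ hp
      have hp' : S.next ⟨i, a⟩ = some q := by
        simpa [ChainSystem.chainEdges] using hp
      rcases (hnext i a q).mp hp' with ⟨b, hb, rfl⟩
      have hab : (a, b) ∈ Gi i := (hGi i).1 (by simp [ChainSystem.chainEdges, hb])
      rw [hEbig]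
      apply Finset.mem_union_left
      exact Finset.mem_biUnion.mpr ⟨i, Finset.mem_univ i,
        Finset.mem_image.mpr ⟨(a, b), hab, rfl⟩⟩
    · intro p hp hpc
      rw [hEbig, Finset.mem_union] at hp
      rcases hp with hp | hp
      · rcases Finset.mem_biUnion.mp hp with ⟨i, _, hpi⟩
        rcases Finset.mem_image.mp hpi with ⟨⟨a, b⟩, hab, hpe⟩
        subst hpe
        have hnc : (a, b) ∉ (Si i).chainEdges := by
          intro hc
          apply hpc
          have : (Si i).next a = some b := by simpa [ChainSystem.chainEdges] using hc
          simp [ChainSystem.chainEdges, (hnext i a ⟨i, b⟩).mpr ⟨b, this, rfl⟩]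
        have hle : Ti i b ≤ (Si i).Tmax (Ti i) a := (hGi i).2 (a, b) hab hnc
        simp only
        unfold ChainSystem.Tmax at hle ⊢
        rw [hS]
        cases hcase : (Si i).next a with
        | none =>
          simp only [hcase, Option.map_none, Option.elim]
          exact (hT.1 ⟨i, b⟩).2
        | some c =>
          simp only [hcase, Option.map_some, Option.elim]
          rw [hcase] at hle
          simp only [Option.elim] at hle
          have h1 : 1 ≤ Ti i c := ((hTi i).1 c).1
          have h2 : 1 ≤ Ti i b := ((hTi i).1 b).1
          have hlt : ¬ (Ti i c ≤ Ti i b) := by omega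
          have hlt' : ¬ (T ⟨i, c⟩ ≤ T ⟨i, b⟩) := fun h => hlt ((hcompat i c b).mp h)
          omega
      · exact (hstar p hp).2
  refine ⟨hconstr, ?_⟩
  have hsrceq : (Finset.univ.biUnion fun i => (Si i).sources.image (Sigma.mk i))
      = S.sources := by
    ext ⟨i, v⟩
    rw [S.mem_sources_iff]
    simp only [Finset.mem_biUnion, Finset.mem_univ, true_and, Finset.mem_image]
    have hsrc_iff : ∀ (i : Fin l) (v : Vt i), S.IsSource ⟨i, v⟩ ↔ (Si i).IsSource v := by
      intro i v
      constructor
      · intro h u hu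
        exact h ⟨i, u⟩ ((hnext i u ⟨i, v⟩).mpr ⟨v, hu, rfl⟩)
      · rintro h ⟨j, u⟩ hu
        rcases (hnext j u ⟨i, v⟩).mp hu with ⟨b, hb, hq⟩
        rcases Sigma.mk.inj_iff.mp hq with ⟨hji, hbv⟩
        subst hji
        exact h u (by rwa [← eq_of_heq hbv] at hb)
    constructor
    · rintro ⟨j, w, hw, hjw⟩
      exact hjw ▸ (hsrc_iff j w).mpr (((Si j).mem_sources_iff w).mp hw)
    · intro h
      exact ⟨i, v, ((Si i).mem_sources_iff v).mpr ((hsrc_iff i v).mp h), rfl⟩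
  rw [hsrceq]
  exact zfs_of_constructed S T hT Ebig hconstr
end

section
/- For i = 1,…,l, let 𝒞^i be a set of m_i node-disjoint chains whose vertex sets partition a set V_i with |V_i| = n_i (the V_i pairwise disjoint), with time function T^i. Let V = ⋃_i V_i, n = Σ_i n_i, m = Σ_i m_i, let 𝒞 = ⋃_i 𝒞^i, and let T be a time function for 𝒞 such that for each i and all u, v ∈ V_i one has T(u) ≤ T(v) if and only if T^i(u) ≤ T^i(v). Define E*_max = {(u,v) : u ∈ V_i, v ∈ V_j, i ≠ j, T_max(u) ≥ T(v)}, where T_max is computed from 𝒞 and T. Then |E*_max| = F(n,m) − Σ_{i=1}^l F(n_i, m_i), where F(n,m) = n(n+1)/2 + m(2n − m − 1)/2. -/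
namespace ChainSystem
variable {V : Type*} [Fintype V] [DecidableEq V] (S : ChainSystem V)

-- auxiliary
def nsrc : Finset V := Finset.univ \ S.sources

lemma mem_sources {v : V} : v ∈ S.sources ↔ ∀ u, S.next u ≠ some v := by
  simp [sources]

lemma mem_nsrc {v : V} : v ∈ S.nsrc ↔ ∃ u, S.next u = some v := by
  simp [nsrc, sources]

lemma m_le_card : S.m ≤ Fintype.card V := by
  simpa [m, Finset.card_univ] using Finset.card_le_card (Finset.subset_univ S.sources)

lemma nsrc_card : S.nsrc.card = Fintype.card V - S.m := by
  simp [nsrc, Finset.card_sdiff_of_subset (Finset.subset_univ _), Finset.card_univ, m]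

variable {T : V → ℕ} (hT : S.IsTimeFunction T)

include hT

lemma two_le_T {v : V} (hv : v ∈ S.nsrc) : 2 ≤ T v := by
  obtain ⟨u, hu⟩ := S.mem_nsrc.1 hv
  have h1 := (hT.1 u).1
  have h2 := hT.2.2.2 u v hu
  omega

lemma image_nsrc : S.nsrc.image T = Finset.Icc 2 S.γ := by
  have hinj : Set.InjOn T S.nsrc := by
    intro a ha b hb hab
    by_contra hne
    have hna : ¬ S.IsSource a := by
      simp only [Finset.mem_coe, mem_nsrc] at ha
      intro h; obtain ⟨u, hu⟩ := ha; exact h u hu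
    have hnb : ¬ S.IsSource b := by
      simp only [Finset.mem_coe, mem_nsrc] at hb
      intro h; obtain ⟨u, hu⟩ := hb; exact h u hu
    exact hT.2.2.1 a b hna hnb hne hab
  have hsub : S.nsrc.image T ⊆ Finset.Icc 2 S.γ := by
    intro t ht
    obtain ⟨v, hv, rfl⟩ := Finset.mem_image.1 ht
    exact Finset.mem_Icc.2 ⟨S.two_le_T hT hv, (hT.1 v).2⟩
  refine Finset.eq_of_subset_of_card_le hsub ?_
  rw [Finset.card_image_of_injOn hinj, nsrc_card]
  have := S.m_le_card
  simp only [Nat.card_Icc, γ]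
  omega

lemma level_card {t : ℕ} (h1 : 1 ≤ t) (h2 : t ≤ S.γ) :
    (Finset.univ.filter fun v => T v ≤ t).card = S.m + (t - 1) := by
  classical
  have huniv : S.sources ∪ S.nsrc = Finset.univ := by
    simp [nsrc, Finset.union_sdiff_of_subset (Finset.subset_univ _)]
  have hsplit : (Finset.univ.filter fun v => T v ≤ t) =
      S.sources ∪ (S.nsrc.filter fun v => T v ≤ t) := by
    rw [← huniv, Finset.filter_union]
    congr 1
    exact Finset.filter_true_of_mem fun v hv => by
      have := hT.2.1 v (S.mem_sources.1 hv); omega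
  have hdisj : Disjoint S.sources (S.nsrc.filter fun v => T v ≤ t) :=
    Finset.disjoint_sdiff.mono_right (Finset.filter_subset _ _)
  rw [hsplit, Finset.card_union_of_disjoint hdisj]
  congr 1
  have hinj : Set.InjOn T (S.nsrc.filter fun v => T v ≤ t) := by
    intro a ha b hb hab
    by_contra hne
    have ha' : a ∈ S.nsrc := (Finset.mem_filter.1 ha).1
    have hb' : b ∈ S.nsrc := (Finset.mem_filter.1 hb).1
    have hna : ¬ S.IsSource a := by
      rw [mem_nsrc] at ha'; intro h; obtain ⟨u, hu⟩ := ha'; exact h u hu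
    have hnb : ¬ S.IsSource b := by
      rw [mem_nsrc] at hb'; intro h; obtain ⟨u, hu⟩ := hb'; exact h u hu
    exact hT.2.2.1 a b hna hnb hne hab
  have : ((S.nsrc.filter fun v => T v ≤ t).image T) = Finset.Icc 2 t := by
    have h3 : (S.nsrc.filter fun v => T v ≤ t) = S.nsrc.filter fun v => T v ≤ t := rfl
    have himg : (S.nsrc.filter fun v => T v ≤ t).image T
        = (S.nsrc.image T).filter fun x => x ≤ t := by
      rw [Finset.filter_image]
    rw [himg, S.image_nsrc hT]
    ext x
    simp only [Finset.mem_filter, Finset.mem_Icc]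
    omega
  calc (S.nsrc.filter fun v => T v ≤ t).card
      = ((S.nsrc.filter fun v => T v ≤ t).image T).card :=
        (Finset.card_image_of_injOn hinj).symm
    _ = t - 1 := by rw [this, Nat.card_Icc]; omega

omit hT in
lemma mem_chainEdges {p : V × V} : p ∈ S.chainEdges ↔ S.next p.1 = some p.2 := by
  simp [chainEdges]

omit hT in
lemma γ_pos : 1 ≤ S.γ := by simp [γ]

lemma Tmax_bounds (v : V) : 1 ≤ S.Tmax T v ∧ S.Tmax T v ≤ S.γ := by
  cases h : S.next v with
  | none => simp [Tmax, h, S.γ_pos]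
  | some w =>
    have h2 : 2 ≤ T w := S.two_le_T hT (S.mem_nsrc.2 ⟨v, h⟩)
    have h3 := (hT.1 w).2
    simp only [Tmax, h, Option.elim]
    omega

lemma pairs_card :
    (Finset.univ.filter fun p : V × V => T p.2 ≤ S.Tmax T p.1).card
      = ∑ u : V, (S.m + (S.Tmax T u - 1)) := by
  classical
  rw [Finset.card_eq_sum_card_fiberwise
    (f := Prod.fst) (t := Finset.univ) (fun p _ => Finset.mem_univ _)]
  refine Finset.sum_congr rfl fun u _ => ?_
  have himg : ((Finset.univ.filter fun p : V × V => T p.2 ≤ S.Tmax T p.1).filter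
      fun p => p.1 = u) = (Finset.univ.filter fun v => T v ≤ S.Tmax T u).image
        (Prod.mk u) := by
    ext ⟨a, b⟩
    simp only [Finset.mem_filter, Finset.mem_univ, true_and, Finset.mem_image,
      Prod.mk.injEq]
    constructor
    · rintro ⟨h1, rfl⟩; exact ⟨b, h1, rfl, rfl⟩
    · rintro ⟨v, hv, rfl, rfl⟩; exact ⟨hv, rfl⟩
  rw [himg, Finset.card_image_of_injective _ (fun a b h => by simpa using h)]
  exact S.level_card hT (S.Tmax_bounds hT u).1 (S.Tmax_bounds hT u).2

omit hT in
lemma edges_card_nsnk :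
    S.chainEdges.card = (Finset.univ.filter fun v => ¬ S.next v = none).card := by
  refine Finset.card_bij (fun p _ => p.1) ?_ ?_ ?_
  · intro p hp
    simp only [Finset.mem_filter, Finset.mem_univ, true_and]
    rw [S.mem_chainEdges.1 hp]; simp
  · intro p hp q hq h
    have hp' := S.mem_chainEdges.1 hp
    have hq' := S.mem_chainEdges.1 hq
    have h' : p.1 = q.1 := h
    rw [h'] at hp'
    have : p.2 = q.2 := by rw [hp'] at hq'; exact Option.some.inj hq'
    exact Prod.ext h' this
  · intro u hu
    simp only [Finset.mem_filter, Finset.mem_univ, true_and] at hu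
    obtain ⟨w, hw⟩ := Option.ne_none_iff_exists'.1 hu
    exact ⟨(u, w), S.mem_chainEdges.2 hw, rfl⟩

omit hT in
lemma edges_card_nsrc : S.chainEdges.card = S.nsrc.card := by
  refine Finset.card_bij (fun p _ => p.2) ?_ ?_ ?_
  · intro p hp
    exact S.mem_nsrc.2 ⟨p.1, S.mem_chainEdges.1 hp⟩
  · intro p hp q hq h
    have hp' := S.mem_chainEdges.1 hp
    have hq' := S.mem_chainEdges.1 hq
    have h' : p.2 = q.2 := h
    rw [h'] at hp'
    exact Prod.ext (S.inj _ _ _ hp' hq') h' 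
  · intro w hw
    obtain ⟨u, hu⟩ := S.mem_nsrc.1 hw
    exact ⟨(u, w), S.mem_chainEdges.2 hu, rfl⟩

omit hT in
lemma snk_card : (Finset.univ.filter fun v => S.next v = none).card = S.m := by
  have h1 := Finset.card_filter_add_card_filter_not
    (s := (Finset.univ : Finset V)) (p := fun v => S.next v = none)
  have h2 := S.edges_card_nsnk
  have h3 := S.edges_card_nsrc
  have h4 := S.nsrc_card
  have h5 := S.m_le_card
  rw [Finset.card_univ] at h1
  omega

lemma sum_nsnk :
    ∑ u ∈ Finset.univ.filter (fun v => ¬ S.next v = none), (S.Tmax T u - 1)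
      = ∑ x ∈ Finset.range (S.γ - 1), x := by
  have s1 : ∑ u ∈ Finset.univ.filter (fun v => ¬ S.next v = none), (S.Tmax T u - 1)
      = ∑ p ∈ S.chainEdges, (T p.2 - 2) := by
    refine (Finset.sum_bij (fun p _ => p.1) ?_ ?_ ?_ ?_).symm
    · intro p hp
      simp only [Finset.mem_filter, Finset.mem_univ, true_and]
      rw [S.mem_chainEdges.1 hp]; simp
    · intro p hp q hq h
      have hp' := S.mem_chainEdges.1 hp
      have hq' := S.mem_chainEdges.1 hq
      have h' : p.1 = q.1 := h
      rw [h'] at hp'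
      have : p.2 = q.2 := by rw [hp'] at hq'; exact Option.some.inj hq'
      exact Prod.ext h' this
    · intro u hu
      simp only [Finset.mem_filter, Finset.mem_univ, true_and] at hu
      obtain ⟨w, hw⟩ := Option.ne_none_iff_exists'.1 hu
      exact ⟨(u, w), S.mem_chainEdges.2 hw, rfl⟩
    · intro p hp
      have hp' := S.mem_chainEdges.1 hp
      simp only [Tmax, hp', Option.elim]
      omega
  have s2 : ∑ p ∈ S.chainEdges, (T p.2 - 2) = ∑ w ∈ S.nsrc, (T w - 2) := by
    refine Finset.sum_bij (fun p _ => p.2) ?_ ?_ ?_ ?_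
    · intro p hp
      exact S.mem_nsrc.2 ⟨p.1, S.mem_chainEdges.1 hp⟩
    · intro p hp q hq h
      have hp' := S.mem_chainEdges.1 hp
      have hq' := S.mem_chainEdges.1 hq
      have h' : p.2 = q.2 := h
      rw [h'] at hp'
      exact Prod.ext (S.inj _ _ _ hp' hq') h' 
    · intro w hw
      obtain ⟨u, hu⟩ := S.mem_nsrc.1 hw
      exact ⟨(u, w), S.mem_chainEdges.2 hu, rfl⟩
    · intro p hp; rfl
  have hinj : ∀ x ∈ S.nsrc, ∀ y ∈ S.nsrc, T x = T y → x = y := by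
    intro a ha b hb hab
    by_contra hne
    have hna : ¬ S.IsSource a := by
      rw [mem_nsrc] at ha; intro h; obtain ⟨u, hu⟩ := ha; exact h u hu
    have hnb : ¬ S.IsSource b := by
      rw [mem_nsrc] at hb; intro h; obtain ⟨u, hu⟩ := hb; exact h u hu
    exact hT.2.2.1 a b hna hnb hne hab
  have s3 : ∑ w ∈ S.nsrc, (T w - 2) = ∑ x ∈ Finset.Icc 2 S.γ, (x - 2) := by
    rw [← S.image_nsrc hT, Finset.sum_image hinj]
  have s4 : Finset.Icc 2 S.γ = (Finset.range (S.γ - 1)).image (· + 2) := by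
    ext x
    simp only [Finset.mem_Icc, Finset.mem_image, Finset.mem_range]
    constructor
    · intro h; exact ⟨x - 2, by omega, by omega⟩
    · rintro ⟨y, hy, rfl⟩; omega
  rw [s1, s2, s3, s4, Finset.sum_image (by intro x _ y _ h; exact Nat.add_right_cancel h)]
  simp

omit hT in
lemma count_arith (n mm Sg : ℕ) (hm : mm ≤ n)
    (h2 : Sg * 2 = (n - mm) * (n - mm - 1)) :
    2 * (n * mm + (mm * (n - mm) + Sg)) + mm * mm + n
      = n * n + 2 * n * mm + mm := by
  obtain ⟨k, rfl⟩ := Nat.exists_eq_add_of_le hm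
  have e : mm + k - mm = k := by omega
  rw [e] at h2 ⊢
  rcases Nat.eq_zero_or_pos k with rfl | hkpos
  · rw [show Sg = 0 by omega]
    ring
  · obtain ⟨d, rfl⟩ : ∃ d, k = d + 1 := ⟨k - 1, by omega⟩
    have e3 : d + 1 - 1 = d := rfl
    rw [e3] at h2
    nlinarith [h2]

lemma count_key :
    2 * (Finset.univ.filter fun p : V × V => T p.2 ≤ S.Tmax T p.1).card
        + S.m * S.m + Fintype.card V
      = Fintype.card V * Fintype.card V + 2 * Fintype.card V * S.m + S.m := by
  classical
  rw [S.pairs_card hT, Finset.sum_add_distrib, Finset.sum_const, Finset.card_univ,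
    smul_eq_mul]
  have hsplit : ∑ u : V, (S.Tmax T u - 1)
      = ∑ u ∈ Finset.univ.filter (fun v => S.next v = none), (S.Tmax T u - 1)
        + ∑ u ∈ Finset.univ.filter (fun v => ¬ S.next v = none), (S.Tmax T u - 1) :=
    (Finset.sum_filter_add_sum_filter_not _ _ _).symm
  have hconst : ∑ u ∈ Finset.univ.filter (fun v => S.next v = none), (S.Tmax T u - 1)
      = S.m * (S.γ - 1) := by
    have h : ∀ u ∈ Finset.univ.filter (fun v => S.next v = none),
        S.Tmax T u - 1 = S.γ - 1 := by
      intro u hu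
      simp only [Finset.mem_filter] at hu
      simp [Tmax, hu.2]
    rw [Finset.sum_congr rfl h, Finset.sum_const, S.snk_card, smul_eq_mul]
  rw [hsplit, hconst, S.sum_nsnk hT]
  have h2 := Finset.sum_range_id_mul_two (S.γ - 1)
  have hγ1 : S.γ - 1 = Fintype.card V - S.m := by
    have : S.γ = Fintype.card V - S.m + 1 := rfl
    omega
  rw [hγ1] at h2 ⊢
  exact count_arith _ _ _ S.m_le_card h2


end ChainSystem

set_option maxHeartbeats 1600000 in
/-- the largest admissible set of cross edges
`E*_max = {(u,v) : u ∈ V_i, v ∈ V_j, i ≠ j, T_max(u) ≥ T(v)}` satisfies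
`|E*_max| = F(n,m) − Σᵢ F(nᵢ,mᵢ)` with `F(n,m) = n(n+1)/2 + m(2n − m − 1)/2`
(stated doubled and with the sum moved to the left, to avoid division and truncated
subtraction). -/
theorem stmt17 {l : ℕ} (Vt : Fin l → Type*) [∀ i, Fintype (Vt i)] [∀ i, DecidableEq (Vt i)]
    (Si : ∀ i, ChainSystem (Vt i)) (Ti : ∀ i, Vt i → ℕ)
    (hTi : ∀ i, (Si i).IsTimeFunction (Ti i))
    (S : ChainSystem (Σ i, Vt i))
    (hS : ∀ (i : Fin l) (v : Vt i), S.next ⟨i, v⟩ = ((Si i).next v).map (Sigma.mk i))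
    (T : (Σ i, Vt i) → ℕ) (hT : S.IsTimeFunction T)
    (hcompat : ∀ (i : Fin l) (u v : Vt i), T ⟨i, u⟩ ≤ T ⟨i, v⟩ ↔ Ti i u ≤ Ti i v) :
    2 * (Finset.univ.filter fun p : (Σ i, Vt i) × (Σ i, Vt i) =>
          p.1.1 ≠ p.2.1 ∧ T p.2 ≤ S.Tmax T p.1).card +
      ∑ i, (Fintype.card (Vt i) * (Fintype.card (Vt i) + 1) +
        (Si i).m * (2 * Fintype.card (Vt i) - (Si i).m - 1)) =
    Fintype.card (Σ i, Vt i) * (Fintype.card (Σ i, Vt i) + 1) +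
      (∑ i, (Si i).m) * (2 * Fintype.card (Σ i, Vt i) - (∑ i, (Si i).m) - 1) := by
  classical
  -- source correspondence
  have hsrc : ∀ (i : Fin l) (v : Vt i), S.IsSource ⟨i, v⟩ ↔ (Si i).IsSource v := by
    intro i v
    constructor
    · intro h u hu
      exact h ⟨i, u⟩ (by rw [hS]; simp [hu])
    · rintro h ⟨j, w⟩
      rw [hS]
      intro hcon
      rcases Option.map_eq_some_iff.1 hcon with ⟨b, hb, hb2⟩
      obtain ⟨rfl, h2⟩ := Sigma.mk.inj_iff.1 hb2
      rw [heq_iff_eq] at h2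
      subst h2
      exact h w hb
  -- m decomposes
  have hm : S.m = ∑ i, (Si i).m := by
    rw [ChainSystem.m,
      Finset.card_eq_sum_card_fiberwise (f := Sigma.fst) (t := Finset.univ)
        (fun v _ => Finset.mem_univ _)]
    refine Finset.sum_congr rfl fun i _ => ?_
    refine (Finset.card_bij (fun v _ => (⟨i, v⟩ : Σ j, Vt j)) ?_ ?_ ?_).symm
    · intro v hv
      exact Finset.mem_filter.2
        ⟨S.mem_sources.2 ((hsrc i v).2 ((Si i).mem_sources.1 hv)), rfl⟩
    · intro a _ b _ hab
      simpa using hab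
    · rintro ⟨j, w⟩ hw
      simp only [Finset.mem_filter] at hw
      obtain ⟨hw1, rfl⟩ := hw
      exact ⟨w, (Si j).mem_sources.2 ((hsrc j w).1 (S.mem_sources.1 hw1)), rfl⟩
  -- Tmax condition equivalence within a component
  have hTmaxEq : ∀ (i : Fin l) (u v : Vt i),
      (T ⟨i, v⟩ ≤ S.Tmax T ⟨i, u⟩) ↔ (Ti i v ≤ (Si i).Tmax (Ti i) u) := by
    intro i u v
    rcases hnu : (Si i).next u with _ | b
    · simp only [ChainSystem.Tmax, hS i u, hnu, Option.map_none, Option.elim]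
      exact ⟨fun _ => ((hTi i).1 v).2, fun _ => (hT.1 _).2⟩
    · simp only [ChainSystem.Tmax, hS i u, hnu, Option.map_some, Option.elim]
      have h1 : 1 ≤ T ⟨i, b⟩ := (hT.1 _).1
      have h2 : 1 ≤ Ti i b := ((hTi i).1 b).1
      have c1 := hcompat i v b
      have c2 := hcompat i b v
      omega
  -- decomposition of the total pair count
  have hdec := Finset.card_filter_add_card_filter_not
    (s := Finset.univ.filter fun p : (Σ i, Vt i) × (Σ i, Vt i) => T p.2 ≤ S.Tmax T p.1)
    (p := fun p => p.1.1 = p.2.1)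
  have hcross : ((Finset.univ.filter fun p : (Σ i, Vt i) × (Σ i, Vt i) =>
      T p.2 ≤ S.Tmax T p.1).filter fun p => ¬ p.1.1 = p.2.1)
      = (Finset.univ.filter fun p : (Σ i, Vt i) × (Σ i, Vt i) =>
          p.1.1 ≠ p.2.1 ∧ T p.2 ≤ S.Tmax T p.1) := by
    rw [Finset.filter_filter]
    ext p
    simp only [Finset.mem_filter, Finset.mem_univ, true_and, ne_eq]
    tauto
  have hsame : ((Finset.univ.filter fun p : (Σ i, Vt i) × (Σ i, Vt i) =>
      T p.2 ≤ S.Tmax T p.1).filter fun p => p.1.1 = p.2.1).card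
      = ∑ i, (Finset.univ.filter fun q : Vt i × Vt i =>
          Ti i q.2 ≤ (Si i).Tmax (Ti i) q.1).card := by
    rw [Finset.card_eq_sum_card_fiberwise (f := fun p => p.1.1) (t := Finset.univ)
      (fun p _ => Finset.mem_univ _)]
    refine Finset.sum_congr rfl fun i _ => ?_
    refine (Finset.card_bij
      (fun q _ => (((⟨i, q.1⟩ : Σ j, Vt j), (⟨i, q.2⟩ : Σ j, Vt j)) :
        (Σ j, Vt j) × (Σ j, Vt j))) ?_ ?_ ?_).symm
    · intro q hq
      refine Finset.mem_filter.2 ⟨Finset.mem_filter.2 ⟨Finset.mem_filter.2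
        ⟨Finset.mem_univ _, ?_⟩, rfl⟩, rfl⟩
      exact (hTmaxEq i q.1 q.2).2 (by simpa using hq)
    · intro a _ b _ hab
      simp only [Prod.mk.injEq, Sigma.mk.inj_iff, heq_iff_eq, true_and] at hab
      exact Prod.ext hab.1 hab.2
    · rintro ⟨⟨j1, a⟩, ⟨j2, b⟩⟩ hp
      simp only [Finset.mem_filter, Finset.mem_univ, true_and] at hp
      obtain ⟨⟨hc, he⟩, hi⟩ := hp
      subst hi
      subst he
      refine ⟨(a, b), ?_, rfl⟩
      simp only [Finset.mem_filter, Finset.mem_univ, true_and]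
      exact (hTmaxEq j1 a b).1 hc
  -- arithmetic helper for the F identity
  have hFID : ∀ n mm : ℕ, mm ≤ n →
      n * (n + 1) + mm * (2 * n - mm - 1) + (mm * mm + mm)
        = n * n + n + 2 * n * mm := by
    intro n mm h
    rcases Nat.eq_zero_or_pos mm with rfl | hpos
    · ring_nf
    · have he : 2 * n - mm - 1 + (mm + 1) = 2 * n := by omega
      have h3 : mm * (2 * n - mm - 1) + mm * (mm + 1) = mm * (2 * n) := by
        rw [← Nat.mul_add, he]
      nlinarith [h3]
  have hCount := S.count_key hT
  have hCi : ∀ i, 2 * (Finset.univ.filter fun q : Vt i × Vt i =>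
        Ti i q.2 ≤ (Si i).Tmax (Ti i) q.1).card + (Si i).m * (Si i).m
        + Fintype.card (Vt i)
      = Fintype.card (Vt i) * Fintype.card (Vt i)
        + 2 * Fintype.card (Vt i) * (Si i).m + (Si i).m :=
    fun i => (Si i).count_key (hTi i)
  have keyi : ∀ i, (Fintype.card (Vt i) * (Fintype.card (Vt i) + 1) +
        (Si i).m * (2 * Fintype.card (Vt i) - (Si i).m - 1)) + 2 * (Si i).m
      = 2 * (Finset.univ.filter fun q : Vt i × Vt i =>
          Ti i q.2 ≤ (Si i).Tmax (Ti i) q.1).card + 2 * Fintype.card (Vt i) := by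
    intro i
    have h1 := hCi i
    have h2 := hFID (Fintype.card (Vt i)) ((Si i).m) (Si i).m_le_card
    linarith
  have keysum : (∑ i, (Fintype.card (Vt i) * (Fintype.card (Vt i) + 1) +
        (Si i).m * (2 * Fintype.card (Vt i) - (Si i).m - 1)))
        + 2 * ∑ i, (Si i).m
      = 2 * (∑ i, (Finset.univ.filter fun q : Vt i × Vt i =>
          Ti i q.2 ≤ (Si i).Tmax (Ti i) q.1).card) + 2 * ∑ i, Fintype.card (Vt i) := by
    rw [Finset.mul_sum, Finset.mul_sum, Finset.mul_sum, ← Finset.sum_add_distrib,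
      ← Finset.sum_add_distrib]
    exact Finset.sum_congr rfl fun i _ => keyi i
  have keyG : (Fintype.card (Σ i, Vt i) * (Fintype.card (Σ i, Vt i) + 1) +
        S.m * (2 * Fintype.card (Σ i, Vt i) - S.m - 1)) + 2 * S.m
      = 2 * (Finset.univ.filter fun p : (Σ i, Vt i) × (Σ i, Vt i) =>
          T p.2 ≤ S.Tmax T p.1).card + 2 * Fintype.card (Σ i, Vt i) := by
    have h2 := hFID (Fintype.card (Σ i, Vt i)) S.m S.m_le_card
    linarith
  have hNsum : Fintype.card (Σ i, Vt i) = ∑ i, Fintype.card (Vt i) := by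
    simp [Fintype.card_sigma]
  rw [hcross] at hdec
  rw [hsame] at hdec
  rw [← hm]
  linarith [hdec, keysum, keyG, hNsum, hm]
end

section
/- Let G be a digraph on vertices v_1,…,v_n such that (v_i, v_{i+1}) ∈ E(G) for all i = 1,…,n−1, and such that every edge (v_i, v_j) ∈ E(G) with j ≠ i+1 satisfies j ≤ i. Then {v_1} is a zero forcing set of G. -/
/-- if a digraph on vertices `v_1, …, v_n` contains the Hamiltonian path
`v_1 → v_2 → ⋯ → v_n` and every other edge `(v_i, v_j)` satisfies `j ≤ i`, then `{v_1}`
is a zero forcing set. -/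
theorem stmt18 (n : ℕ) (hn : 0 < n) (E : Finset (Fin n × Fin n))
    (hpath : ∀ i j : Fin n, (j : ℕ) = (i : ℕ) + 1 → (i, j) ∈ E)
    (hback : ∀ i j : Fin n, (i, j) ∈ E → (j : ℕ) ≠ (i : ℕ) + 1 → j ≤ i) :
    IsZFS E {(⟨0, hn⟩ : Fin n)} := by
  -- B k = vertices with index ≤ k
  set B : ℕ → Finset (Fin n) := fun k => Finset.univ.filter (fun v => (v : ℕ) ≤ k) with hB
  have key : ∀ d k, k < n → n - 1 - k = d → ZFReach E (B k) Finset.univ := by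
    intro d
    induction d with
    | zero =>
      intro k hk hd
      have hk' : k = n - 1 := by omega
      have : B k = Finset.univ := by
        ext v
        simp only [hB, Finset.mem_filter, Finset.mem_univ, true_and, iff_true]
        omega
      rw [this]; exact ZFReach.refl _
    | succ d ih =>
      intro k hk hd
      have hk1 : k + 1 < n := by omega
      have hforce : Forces E (B k) ⟨k, hk⟩ ⟨k + 1, hk1⟩ := by
        refine ⟨?_, ?_, ?_, ?_, ?_⟩
        · simp [hB]
        · simp [hB]
        · intro h; exact absurd (congrArg Fin.val h) (by simp)
        · exact hpath _ _ rfl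
        · intro w hw hwu hwB
          by_cases hval : (w : ℕ) = k + 1
          · exact Fin.ext hval
          · exfalso
            have := hback _ _ hw (by simpa using hval)
            apply hwB
            simp only [hB, Finset.mem_filter, Finset.mem_univ, true_and]
            exact this
      have hins : insert (⟨k + 1, hk1⟩ : Fin n) (B k) = B (k + 1) := by
        ext v
        simp only [Finset.mem_insert, hB, Finset.mem_filter, Finset.mem_univ, true_and]
        constructor
        · rintro (rfl | h)
          · simp
          · omega
        · intro h
          rcases Nat.lt_or_ge (v : ℕ) (k + 1) with h' | h'
          · right; omega
          · left; exact Fin.ext (show (v : ℕ) = k + 1 by omega)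
      exact ZFReach.step hforce (hins ▸ ih (k + 1) hk1 (by omega))
  have h0 : ({(⟨0, hn⟩ : Fin n)} : Finset (Fin n)) = B 0 := by
    ext v
    simp only [Finset.mem_singleton, hB, Finset.mem_filter, Finset.mem_univ, true_and,
      Nat.le_zero]
    constructor
    · rintro rfl; rfl
    · intro h; exact Fin.ext h
  unfold IsZFS
  rw [h0]
  exact key (n - 1 - 0) 0 hn rfl
end
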